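/- arXiv:1212.4330 — 5 statements merged into one kernel-verified Lean document; each statement's English description precedes it below -/
import Mathlib

section
/- Let X be an indecomposable crossed set, u ∈ X, and T = {x ∈ X | u ▷ x ≠ x}. Then for every t ∈ T there exists t' ∈ T with t ▷ t' ≠ t'. -/
/-- A rack structure on a set `X`: a binary operation `act` such that each left
translation is bijective and `act` is self-distributive. -/
structure RackStr (X : Type*) where
  act : X → X → X
  bij : ∀ x, Function.Bijective (act x)
  self_distrib : ∀ x y z, act x (act y z) = act (act x y) (act x z)

namespace RackStr

variable {X : Type*}

/-- A quandle is a rack with `x ▷ x = x`. -/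
def IsQuandle (R : RackStr X) : Prop := ∀ x, R.act x x = x

/-- A crossed set is a quandle in which `x ▷ y = y ↔ y ▷ x = x`. -/
def IsCrossed (R : RackStr X) : Prop :=
  R.IsQuandle ∧ ∀ x y, R.act x y = y ↔ R.act y x = x

/-- The left translation `φ_x` as a permutation. -/
noncomputable def perm (R : RackStr X) (x : X) : Equiv.Perm X :=
  Equiv.ofBijective (R.act x) (R.bij x)

/-- A rack is indecomposable if its inner group (generated by the `φ_x`)
acts transitively. -/
def Indecomposable (R : RackStr X) : Prop :=
  ∀ x y : X, ∃ π ∈ Subgroup.closure (Set.range R.perm), π x = y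

end RackStr

/-!
Suppose `t ∈ T` fixed every element of `T`. The set `Y` of common fixed points of the
translations `φ_w`, `w ∈ T`, is invariant under the inner group: a translation `φ_x` with
`x ∈ T` fixes `Y` pointwise, while one with `x ∉ T` commutes with `φ_u`, hence permutes `T`,
and conjugates the `φ_w` among themselves. By the crossed-set symmetry `t ∈ Y` but `u ∉ Y`,
which contradicts transitivity.
-/

namespace RackStr

open scoped Pointwise

variable {X : Type*} (R : RackStr X)

def moved (u : X) : Set X := {x | R.act u x ≠ x}

def fixers (S : Set X) : Set X := {y | ∀ w ∈ S, R.act w y = y}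

@[simp]
lemma perm_apply (x y : X) : R.perm x y = R.act x y := rfl

lemma act_injective (x : X) : Function.Injective (R.act x) := (R.bij x).injective

lemma act_act_of_act_eq {u x : X} (hux : R.act u x = x) (w : X) :
    R.act u (R.act x w) = R.act x (R.act u w) := by
  rw [R.self_distrib, hux]

lemma act_mem_moved_iff_of_act_eq {u x : X} (hux : R.act u x = x) (w : X) :
    R.act x w ∈ R.moved u ↔ w ∈ R.moved u :=
  not_congr <| by rw [R.act_act_of_act_eq hux, (R.act_injective x).eq_iff]

lemma act_mem_fixers_iff_of_act_mem_iff {S : Set X} {x : X} (hS : ∀ w, R.act x w ∈ S ↔ w ∈ S)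
    (y : X) : R.act x y ∈ R.fixers S ↔ y ∈ R.fixers S := by
  have hreindex : ∀ P : X → Prop, (∀ w ∈ S, P w) ↔ ∀ w ∈ S, P (R.act x w) := fun P =>
    ⟨fun h w hw => h _ ((hS w).2 hw), fun h w hw => by
      obtain ⟨w', rfl⟩ := (R.bij x).surjective w
      exact h w' ((hS w').1 hw)⟩
  simp only [fixers, Set.mem_ofPred_eq, hreindex (fun w => R.act w (R.act x y) = R.act x y),
    ← R.self_distrib, (R.act_injective x).eq_iff]

lemma act_mem_fixers_iff_of_mem {S : Set X} {x : X} (hx : x ∈ S) (y : X) :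
    R.act x y ∈ R.fixers S ↔ y ∈ R.fixers S := by
  refine ⟨fun h => ?_, fun h => by rwa [h x hx]⟩
  rwa [← R.act_injective x (h x hx)]

lemma perm_mem_stabilizer_fixers_moved (u x : X) :
    R.perm x ∈ MulAction.stabilizer (Equiv.Perm X) (R.fixers (R.moved u)) := by
  rw [MulAction.mem_stabilizer_set]
  intro y
  rw [Equiv.Perm.smul_def, perm_apply]
  by_cases hx : x ∈ R.moved u
  · exact R.act_mem_fixers_iff_of_mem hx y
  · exact R.act_mem_fixers_iff_of_act_mem_iff (R.act_mem_moved_iff_of_act_eq (not_not.1 hx)) y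

lemma closure_range_perm_le_stabilizer_fixers_moved (u : X) :
    Subgroup.closure (Set.range R.perm) ≤
      MulAction.stabilizer (Equiv.Perm X) (R.fixers (R.moved u)) :=
  (Subgroup.closure_le _).2 <| Set.range_subset_iff.2 (R.perm_mem_stabilizer_fixers_moved u)

lemma Indecomposable.fixers_moved_eq_univ {R : RackStr X} (hind : R.Indecomposable)
    {u t : X} (ht : t ∈ R.fixers (R.moved u)) : R.fixers (R.moved u) = Set.univ := by
  refine Set.eq_univ_of_forall fun y => ?_
  obtain ⟨π, hπ, rfl⟩ := hind t y
  exact (MulAction.mem_stabilizer_set.1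
    (R.closure_range_perm_le_stabilizer_fixers_moved u hπ) t).2 ht

end RackStr

/-- in an indecomposable crossed set, for
`T = {x | u ▷ x ≠ x}`, every `t ∈ T` moves some element of `T`. -/
theorem indecomposable_crossedSet_T_moves_T {X : Type*} (R : RackStr X)
    (hc : R.IsCrossed) (hind : R.Indecomposable) (u : X) (T : Set X)
    (hT : T = {x : X | R.act u x ≠ x}) :
    ∀ t ∈ T, ∃ t' ∈ T, R.act t t' ≠ t' := by
  subst hT
  intro t ht
  by_contra! hfix
  have htY : t ∈ R.fixers (R.moved u) := fun w hw => (hc.2 t w).1 (hfix w hw)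
  have huY : u ∈ R.fixers (R.moved u) := hind.fixers_moved_eq_univ htY ▸ Set.mem_univ u
  exact ht ((hc.2 t u).1 (huY t ht))
end

section
/- Let d ∈ ℕ, a, b ∈ ℕ with a, b ≥ 2 and gcd(a, b) = 1, and let X = {1, ..., d} be an indecomposable crossed set such that for every x ∈ X, φ_1^a(x) = x or φ_1^b(x) = x. Define S = {x ∈ X | 1 ▷ x = x, x ≠ 1}, T_a = {x | φ_1^a(x) = x, 1 ▷ x ≠ x}, T_b = {x | φ_1^b(x) = x, 1 ▷ x ≠ x}. Then X is the disjoint union of {1}, S, T_a, T_b, and moreover: 1 ▷ 1 = 1, 1 ▷ S = S, 1 ▷ T_a = T_a, 1 ▷ T_b = T_b; s ▷ 1 = 1, s ▷ S = S, s ▷ T_a = T_a, s ▷ T_b = T_b for all s ∈ S; x ▷ T_b = T_b for all x ∈ T_a; and y ▷ T_a = T_a for all y ∈ T_b. -/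
/-!
Self-distributivity makes `φ_e^n` an automorphism of the rack, so every `φ_w` with `w` fixed by
`φ_e^n` commutes with `φ_e^n`; and a bijection commuting with `g` permutes every set cut out by
fixed-point conditions on iterates of `g`. This handles `S` (where the crossed-set axiom turns
`e ▷ s = s` into `s ▷ e = e`), `T_a` and `T_b`. For `x ∈ T_a` acting on `T_b`, coprimality and
the covering hypothesis give `T_b = {z | φ_e^a z ≠ z}`, which `φ_x` preserves since it commutes
with `φ_e^a`.
-/

open Function

section FixedPoints

variable {X : Type*} {f g : X → X}

theorem Function.Bijective.image_eq_self {T : Set X} (hf : Bijective f)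
    (h : ∀ z, f z ∈ T ↔ z ∈ T) : f '' T = T :=
  calc f '' T = f '' (f ⁻¹' T) := by congr 1; ext z; exact (h z).symm
    _ = T := hf.surjective.image_preimage T

theorem Function.Commute.isFixedPt_apply_iff (h : Function.Commute f g) (hf : Injective f)
    {z : X} : IsFixedPt g (f z) ↔ IsFixedPt g z := by
  rw [IsFixedPt, ← h.eq, hf.eq_iff, IsFixedPt]

theorem Function.IsPeriodicPt.isFixedPt_of_coprime {a b : ℕ} {z : X} (ha : IsPeriodicPt g a z)
    (hb : IsPeriodicPt g b z) (hab : a.Coprime b) : IsFixedPt g z := by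
  simpa only [hab.gcd_eq_one, IsPeriodicPt, iterate_one] using ha.gcd hb

theorem image_setOf_isFixedPt_and_ne (hf : Bijective f) (h : Function.Commute f g) {e : X}
    (he : f e = e) : f '' {z | g z = z ∧ z ≠ e} = {z | g z = z ∧ z ≠ e} :=
  hf.image_eq_self fun _ => and_congr (h.isFixedPt_apply_iff hf.1) (hf.1.ne_iff' he)

theorem image_setOf_isPeriodicPt_and_not_isFixedPt (hf : Bijective f) (h : Function.Commute f g)
    (n : ℕ) : f '' {z | g^[n] z = z ∧ g z ≠ z} = {z | g^[n] z = z ∧ g z ≠ z} :=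
  hf.image_eq_self fun _ => and_congr ((h.iterate_right n).isFixedPt_apply_iff hf.1)
    (not_congr (h.isFixedPt_apply_iff hf.1))

theorem image_setOf_not_isFixedPt (hf : Bijective f) (h : Function.Commute f g) :
    f '' {z | g z ≠ z} = {z | g z ≠ z} :=
  hf.image_eq_self fun _ => not_congr (h.isFixedPt_apply_iff hf.1)

theorem setOf_isPeriodicPt_and_not_isFixedPt_eq_of_coprime {a b : ℕ} (hab : a.Coprime b)
    (hcover : ∀ z, g^[a] z = z ∨ g^[b] z = z) :
    {z | g^[b] z = z ∧ g z ≠ z} = {z | g^[a] z ≠ z} := by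
  ext z
  constructor
  · exact fun ⟨hb, hne⟩ ha => hne (IsPeriodicPt.isFixedPt_of_coprime ha hb hab)
  · exact fun hna => ⟨(hcover z).resolve_left hna, fun h => hna (IsFixedPt.iterate h a)⟩

theorem image_setOf_isPeriodicPt_and_not_isFixedPt_of_coprime (hf : Bijective f) {a b : ℕ}
    (hab : a.Coprime b) (hcover : ∀ z, g^[a] z = z ∨ g^[b] z = z)
    (h : Function.Commute f g^[a]) :
    f '' {z | g^[b] z = z ∧ g z ≠ z} = {z | g^[b] z = z ∧ g z ≠ z} := by
  rw [setOf_isPeriodicPt_and_not_isFixedPt_eq_of_coprime hab hcover]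
  exact image_setOf_not_isFixedPt hf h

end FixedPoints

namespace RackStr

variable {X : Type*} (R : RackStr X)

theorem iterate_act_act (e : X) (n : ℕ) (w z : X) :
    (R.act e)^[n] (R.act w z) = R.act ((R.act e)^[n] w) ((R.act e)^[n] z) := by
  induction n generalizing w z with
  | zero => rfl
  | succ n ih =>
    rw [iterate_succ_apply, R.self_distrib, ih, ← iterate_succ_apply, ← iterate_succ_apply]

theorem commute_act_iterate {e w : X} {n : ℕ} (hw : (R.act e)^[n] w = w) :
    Function.Commute (R.act w) (R.act e)^[n] := fun z => by
  rw [iterate_act_act, hw]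

end RackStr

theorem abdec_general {X : Type*} (R : RackStr X) (hc : R.IsCrossed)
    (e : X) (a b : ℕ)
    (hab : Nat.gcd a b = 1)
    (hcover : ∀ x : X, (R.act e)^[a] x = x ∨ (R.act e)^[b] x = x)
    (S Ta Tb : Set X)
    (hS : S = {x : X | R.act e x = x ∧ x ≠ e})
    (hTa : Ta = {x : X | (R.act e)^[a] x = x ∧ R.act e x ≠ x})
    (hTb : Tb = {x : X | (R.act e)^[b] x = x ∧ R.act e x ≠ x}) :
    ({e} ∪ S ∪ Ta ∪ Tb = (Set.univ : Set X)) ∧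
    Disjoint ({e} : Set X) S ∧ Disjoint ({e} : Set X) Ta ∧
    Disjoint ({e} : Set X) Tb ∧ Disjoint S Ta ∧ Disjoint S Tb ∧
    Disjoint Ta Tb ∧
    R.act e e = e ∧ R.act e '' S = S ∧ R.act e '' Ta = Ta ∧ R.act e '' Tb = Tb ∧
    (∀ s ∈ S, R.act s e = e ∧ R.act s '' S = S ∧
      R.act s '' Ta = Ta ∧ R.act s '' Tb = Tb) ∧
    (∀ x ∈ Ta, R.act x '' Tb = Tb) ∧ (∀ y ∈ Tb, R.act y '' Ta = Ta) := by
  subst hS hTa hTb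
  have hee : R.act e e = e := hc.1 e
  have hcomm_e : Function.Commute (R.act e) (R.act e) := Function.Commute.refl _
  refine ⟨?_, ?_, ?_, ?_, ?_, ?_, ?_, hee, image_setOf_isFixedPt_and_ne (R.bij e) hcomm_e hee,
    image_setOf_isPeriodicPt_and_not_isFixedPt (R.bij e) hcomm_e a,
    image_setOf_isPeriodicPt_and_not_isFixedPt (R.bij e) hcomm_e b, ?_, ?_, ?_⟩
  · ext x
    simp only [Set.mem_union, Set.mem_singleton_iff, Set.mem_ofPred_eq, Set.mem_univ, iff_true]
    have := hcover x
    tauto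
  · exact Set.disjoint_left.2 fun _ hx hS => hS.2 hx
  · exact Set.disjoint_left.2 fun _ hx hT => hT.2 (hx ▸ hee)
  · exact Set.disjoint_left.2 fun _ hx hT => hT.2 (hx ▸ hee)
  · exact Set.disjoint_left.2 fun _ hS hT => hT.2 hS.1
  · exact Set.disjoint_left.2 fun _ hS hT => hT.2 hS.1
  · exact Set.disjoint_left.2 fun _ hTa hTb =>
      hTa.2 (IsPeriodicPt.isFixedPt_of_coprime hTa.1 hTb.1 hab)
  · rintro s ⟨hs, -⟩
    have hse : R.act s e = e := (hc.2 e s).1 hs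
    have hcomm_s : Function.Commute (R.act s) (R.act e) := R.commute_act_iterate (n := 1) hs
    exact ⟨hse, image_setOf_isFixedPt_and_ne (R.bij s) hcomm_s hse,
      image_setOf_isPeriodicPt_and_not_isFixedPt (R.bij s) hcomm_s a,
      image_setOf_isPeriodicPt_and_not_isFixedPt (R.bij s) hcomm_s b⟩
  · rintro x ⟨hx, -⟩
    exact image_setOf_isPeriodicPt_and_not_isFixedPt_of_coprime (R.bij x) hab hcover
      (R.commute_act_iterate hx)
  · rintro y ⟨hy, -⟩
    exact image_setOf_isPeriodicPt_and_not_isFixedPt_of_coprime (R.bij y)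
      (Nat.Coprime.symm hab) (fun z => (hcover z).symm) (R.commute_act_iterate hy)

/-- decomposition of an indecomposable crossed set under the
assumption that every element is fixed by `φ_e^a` or `φ_e^b` with
`gcd(a,b) = 1`. -/
theorem abdec {X : Type*} (R : RackStr X) (hc : R.IsCrossed)
    (hind : R.Indecomposable) (e : X) (a b : ℕ)
    (ha : 2 ≤ a) (hb : 2 ≤ b) (hab : Nat.gcd a b = 1)
    (hcover : ∀ x : X, (R.act e)^[a] x = x ∨ (R.act e)^[b] x = x)
    (S Ta Tb : Set X)
    (hS : S = {x : X | R.act e x = x ∧ x ≠ e})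
    (hTa : Ta = {x : X | (R.act e)^[a] x = x ∧ R.act e x ≠ x})
    (hTb : Tb = {x : X | (R.act e)^[b] x = x ∧ R.act e x ≠ x}) :
    ({e} ∪ S ∪ Ta ∪ Tb = (Set.univ : Set X)) ∧
    Disjoint ({e} : Set X) S ∧ Disjoint ({e} : Set X) Ta ∧
    Disjoint ({e} : Set X) Tb ∧ Disjoint S Ta ∧ Disjoint S Tb ∧
    Disjoint Ta Tb ∧
    R.act e e = e ∧ R.act e '' S = S ∧ R.act e '' Ta = Ta ∧ R.act e '' Tb = Tb ∧
    (∀ s ∈ S, R.act s e = e ∧ R.act s '' S = S ∧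
      R.act s '' Ta = Ta ∧ R.act s '' Tb = Tb) ∧
    (∀ x ∈ Ta, R.act x '' Tb = Tb) ∧ (∀ y ∈ Tb, R.act y '' Ta = Ta) :=
  abdec_general R hc e a b hab hcover S Ta Tb hS hTa hTb
end

section
/- Let X be an injective rack, 𝒪 ⊆ X³ a Hurwitz orbit, and (x, y, z) ∈ 𝒪. Then the intersection of the ⟨σ_1⟩-orbit of (x,y,z) with the ⟨σ_2⟩-orbit of (x,y,z) consists of exactly one element, namely (x,y,z) itself. -/
/-- Relations of the enveloping group `G_X`: `x y = (x ▷ y) x` for `x, y ∈ X`. -/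
def envRels {X : Type*} (R : RackStr X) : Set (FreeGroup X) :=
  {w | ∃ x y : X,
    w = FreeGroup.of x * FreeGroup.of y *
      (FreeGroup.of (R.act x y) * FreeGroup.of x)⁻¹}

/-- The first Hurwitz move `σ₁ · (x,y,z) = (x ▷ y, x, z)`. -/
def hs1 {X : Type*} (R : RackStr X) (v : X × X × X) : X × X × X :=
  (R.act v.1 v.2.1, v.1, v.2.2)

/-- The second Hurwitz move `σ₂ · (x,y,z) = (x, y ▷ z, y)`. -/
def hs2 {X : Type*} (R : RackStr X) (v : X × X × X) : X × X × X :=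
  (v.1, R.act v.2.1 v.2.2, v.2.1)

/-!
`σ₁` preserves the product `x y z` in the enveloping group and fixes the third coordinate,
while `σ₂` fixes the first. A common point `(x, y', z)` of the two orbits of `(x, y, z)`
therefore satisfies `x y' z = x y z` in `G_X`, so `y' = y` by cancellation and injectivity.
-/

theorem Function.apply_eq_of_iterate_eq_or {α β : Type*} {f : α → α} {g : α → β}
    (h : g ∘ f = g) {v w : α} {n : ℕ} (hvw : f^[n] v = w ∨ f^[n] w = v) : g w = g v := by
  rcases hvw with rfl | rfl
  · exact congrFun (Function.iterate_invariant h n) v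
  · exact (congrFun (Function.iterate_invariant h n) w).symm

namespace RackStr

variable {X : Type*} (R : RackStr X)

theorem of_mul_of (x y : X) :
    (PresentedGroup.of x : PresentedGroup (envRels R)) * PresentedGroup.of y =
      PresentedGroup.of (R.act x y) * PresentedGroup.of x := by
  rw [← mul_inv_eq_one]
  exact PresentedGroup.one_of_mem (rels := envRels R) ⟨x, y, rfl⟩

def envProd (v : X × X × X) : PresentedGroup (envRels R) :=
  PresentedGroup.of v.1 * PresentedGroup.of v.2.1 * PresentedGroup.of v.2.2

theorem envProd_comp_hs1 : R.envProd ∘ hs1 R = R.envProd := by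
  funext v
  simp only [Function.comp_apply, envProd, hs1, ← of_mul_of]

theorem eq_of_envProd_eq
    (hinj : Function.Injective
      (fun x : X => (PresentedGroup.of x : PresentedGroup (envRels R))))
    {u v : X × X × X} (h₁ : u.1 = v.1) (h₃ : u.2.2 = v.2.2) (h : R.envProd u = R.envProd v) :
    u = v := by
  simp only [envProd, h₁, h₃] at h
  exact Prod.ext h₁ (Prod.ext (hinj (mul_left_cancel (mul_right_cancel h))) h₃)

end RackStr

/-- for an injective rack `X` (the canonical map `X → G_X` is
injective) and any `v = (x,y,z) ∈ X³`, the `⟨σ₁⟩`-orbit of `v` and the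
`⟨σ₂⟩`-orbit of `v` intersect exactly in `{v}`. The cyclic orbit of the
bijection `hs1` (resp. `hs2`) through `v` consists of all forward and
backward iterates of `v`. -/
theorem sigma1_orbit_inter_sigma2_orbit {X : Type*} (R : RackStr X)
    (hinj : Function.Injective
      (fun x : X => (PresentedGroup.of x : PresentedGroup (envRels R))))
    (v : X × X × X) :
    {w | ∃ n : ℕ, (hs1 R)^[n] v = w ∨ (hs1 R)^[n] w = v} ∩
      {w | ∃ n : ℕ, (hs2 R)^[n] v = w ∨ (hs2 R)^[n] w = v} = {v} := by
  ext w
  simp only [Set.mem_inter_iff, Set.mem_ofPred_eq, Set.mem_singleton_iff]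
  constructor
  · rintro ⟨⟨n, h1⟩, ⟨m, h2⟩⟩
    have hx : w.1 = v.1 :=
      Function.apply_eq_of_iterate_eq_or (f := hs2 R) (g := Prod.fst) rfl h2
    have hz : w.2.2 = v.2.2 :=
      Function.apply_eq_of_iterate_eq_or (f := hs1 R) (g := fun u => u.2.2) rfl h1
    exact R.eq_of_envProd_eq hinj hx hz
      (Function.apply_eq_of_iterate_eq_or R.envProd_comp_hs1 h1)
  · rintro rfl
    exact ⟨⟨0, Or.inl rfl⟩, ⟨0, Or.inl rfl⟩⟩
end

section
/- Let m ≥ 2 and λ ∈ ℤ/m. Consider the monotone closure operator on subsets of ℤ/m generated by the rule: if x − 1, x − λ − 1, and x + λ all lie in P, then x may be added. Then the set I = ⟨λ⟩ ∪ J, where J is any set of representatives for (ℤ/m)/⟨λ⟩, is a plague, i.e., iterating the closure starting from I yields all of ℤ/m. -/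
/-- Membership in the closure of `I ⊆ ℤ/m` under the rule: if `x − 1`,
`x − λ − 1` and `x + λ` all lie in `P`, then `x` may be added. -/
inductive Reach11 {m : ℕ} (lam : ZMod m) (I : Set (ZMod m)) : ZMod m → Prop
  | base (x : ZMod m) (hx : x ∈ I) : Reach11 lam I x
  | step (x : ZMod m) (h1 : Reach11 lam I (x - 1))
      (h2 : Reach11 lam I (x - lam - 1)) (h3 : Reach11 lam I (x + lam)) :
      Reach11 lam I x

/-!
Induct on `n` to show that the whole coset `n + ⟨λ⟩` is reachable. The coset `⟨λ⟩` lies in `I`.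
If the coset of `b - 1` is reachable and so is `b` (its representative in `J`), then the rule
applied at `x = b - (k + 1) λ` only needs `x - 1` and `x - λ - 1`, both in the coset of `b - 1`,
and `x + λ = b - k λ`; so the coset spreads downwards from `b`. Since `λ` has finite order in
`ℤ/m`, the elements `b - k λ` with `k ∈ ℕ` exhaust the coset of `b`.
-/

namespace Reach11

def CosetReached {m : ℕ} (lam : ZMod m) (I : Set (ZMod m)) (a : ZMod m) : Prop :=
  ∀ s ∈ AddSubgroup.zmultiples lam, Reach11 lam I (a + s)

variable {m : ℕ} {lam : ZMod m} {I : Set (ZMod m)}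

theorem CosetReached.of_sub_mem {a b : ZMod m} (ha : CosetReached lam I a)
    (hab : b - a ∈ AddSubgroup.zmultiples lam) : CosetReached lam I b := fun s hs => by
  convert ha (b - a + s) (add_mem hab hs) using 1
  abel

theorem sub_nsmul_of_cosetReached_sub_one {b : ZMod m} (hcoset : CosetReached lam I (b - 1))
    (hb : Reach11 lam I b) (k : ℕ) : Reach11 lam I (b - k • lam) := by
  induction k with
  | zero => simpa using hb
  | succ k ih =>
    have hmem : -((k + 1) • lam) ∈ AddSubgroup.zmultiples lam :=
      neg_mem (nsmul_mem (AddSubgroup.mem_zmultiples lam) _)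
    refine .step _ ?_ ?_ ?_
    · convert hcoset _ hmem using 1
      abel
    · convert hcoset _ (sub_mem hmem (AddSubgroup.mem_zmultiples lam)) using 1
      abel
    · convert ih using 1
      rw [succ_nsmul]
      abel

theorem cosetReached_of_cosetReached_sub_one [NeZero m] {b : ZMod m}
    (hcoset : CosetReached lam I (b - 1)) (hb : Reach11 lam I b) : CosetReached lam I b := by
  intro s hs
  obtain ⟨k, hk⟩ : -s ∈ AddSubmonoid.multiples lam :=
    mem_multiples_iff_mem_zmultiples.mpr (neg_mem hs)
  simpa [hk, sub_eq_add_neg] using sub_nsmul_of_cosetReached_sub_one hcoset hb k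

end Reach11

/-- the union of the subgroup `⟨λ⟩` with any set of coset
representatives for `(ℤ/m)/⟨λ⟩` is a plague for the rule
"if `x−1, x−λ−1, x+λ ∈ P` then add `x`". -/
theorem subgroup_union_representatives_plague (m : ℕ) (hm : 2 ≤ m)
    (lam : ZMod m) (J I : Set (ZMod m))
    (hJ : ∀ y : ZMod m, ∃! j, j ∈ J ∧ y - j ∈ AddSubgroup.zmultiples lam)
    (hI : I = (AddSubgroup.zmultiples lam : Set (ZMod m)) ∪ J) :
    ∀ x : ZMod m, Reach11 lam I x := by
  have : NeZero m := ⟨by omega⟩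
  have hcoset : ∀ n : ℕ, Reach11.CosetReached lam I n := by
    intro n
    induction n with
    | zero => exact fun s hs => .base _ (hI ▸ Or.inl (by simpa using hs))
    | succ n ih =>
      obtain ⟨j, ⟨hjJ, hj⟩, -⟩ := hJ (n + 1 : ℕ)
      have hj_sub : Reach11.CosetReached lam I (j - 1) :=
        ih.of_sub_mem <| by
          convert neg_mem hj using 1
          push_cast
          abel
      have hj_reach : Reach11 lam I j := .base j (hI ▸ Or.inr hjJ)
      exact (Reach11.cosetReached_of_cosetReached_sub_one hj_sub hj_reach).of_sub_mem hj
  intro x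
  simpa using hcoset x.val 0 (zero_mem _)
end

section
/- Let m ≥ 2 and λ ∈ ℤ/m with λ ∉ {0, 1}. Consider the monotone closure operator on subsets of ℤ/m generated by the rule: if x − λ ∈ P and x − λ + 1 ∈ P then x may be added. Then the interval I = {0, 1, ..., ⌈m/2⌉ − 1} (of size ⌈m/2⌉ when m is odd, m/2 when m is even) is a plague: its iterated closure is all of ℤ/m. -/
/-!
Write `L` for the least non-negative representative of `λ`, and `n = ⌈m/2⌉`. If `2 ≤ L ≤ n`,
every natural number `k ≥ n` is reached from `k - L` and `k - L + 1`, both smaller, so strong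
induction from the interval covers all of `ℤ/m`. Otherwise `1 - λ` has representative
`m + 1 - L ∈ [2, n]`, and the reflection `x ↦ (n - 1) - x`, which fixes the interval, turns the
rule for `λ` into the rule for `1 - λ`.
-/

/-- Membership in the closure of `I ⊆ ℤ/m` under the rule: if `x − λ ∈ P`
and `x − λ + 1 ∈ P` then `x` may be added. -/
inductive Reach12 {m : ℕ} (lam : ZMod m) (I : Set (ZMod m)) : ZMod m → Prop
  | base (x : ZMod m) (hx : x ∈ I) : Reach12 lam I x
  | step (x : ZMod m) (h1 : Reach12 lam I (x - lam))
      (h2 : Reach12 lam I (x - lam + 1)) : Reach12 lam I x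

namespace Reach12

variable {m : ℕ} {lam : ZMod m} {I : Set (ZMod m)}

theorem natCast_of_le {n L : ℕ} (hI : ∀ k < n, (k : ZMod m) ∈ I) (hL : (L : ZMod m) = lam)
    (h2L : 2 ≤ L) (hLn : L ≤ n) (k : ℕ) : Reach12 lam I k := by
  induction k using Nat.strong_induction_on with
  | _ k ih =>
    by_cases hk : k < n
    · exact base _ (hI k hk)
    · have hLk : L ≤ k := by omega
      refine step _ ?_ ?_
      · simpa [Nat.cast_sub hLk, hL] using ih (k - L) (by omega)
      · simpa [Nat.cast_sub hLk, hL] using ih (k - L + 1) (by omega)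

theorem of_le [NeZero m] {n L : ℕ} (hI : ∀ k < n, (k : ZMod m) ∈ I)
    (hL : (L : ZMod m) = lam) (h2L : 2 ≤ L) (hLn : L ≤ n) (x : ZMod m) : Reach12 lam I x := by
  simpa using natCast_of_le hI hL h2L hLn x.val

theorem reflect (c : ZMod m) {x : ZMod m} (hx : Reach12 lam ((c - ·) ⁻¹' I) x) :
    Reach12 (1 - lam) I (c - x) := by
  induction hx with
  | base x hx => exact base _ hx
  | step x _ _ ih₁ ih₂ =>
    refine step _ ?_ ?_
    · convert ih₂ using 1; ring
    · convert ih₁ using 1; ring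

end Reach12

theorem ZMod.exists_natCast_eq_or_one_sub_eq {m : ℕ} [NeZero m] {lam : ZMod m} (h0 : lam ≠ 0)
    (h1 : lam ≠ 1) :
    ∃ L : ℕ, 2 ≤ L ∧ L ≤ (m + 1) / 2 ∧ ((L : ZMod m) = lam ∨ (L : ZMod m) = 1 - lam) := by
  have hL0 : lam.val ≠ 0 := by rwa [ZMod.val_ne_zero]
  have hL1 : lam.val ≠ 1 := fun h => h1 (by rw [← ZMod.natCast_zmod_val lam, h, Nat.cast_one])
  have hLm := lam.val_lt
  by_cases hsmall : lam.val ≤ (m + 1) / 2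
  · exact ⟨lam.val, by omega, hsmall, .inl (ZMod.natCast_zmod_val lam)⟩
  · refine ⟨m + 1 - lam.val, by omega, by omega, .inr ?_⟩
    rw [Nat.cast_sub (by omega), Nat.cast_add, ZMod.natCast_self, ZMod.natCast_zmod_val]
    ring

/-- for `λ ∉ {0,1}`, the interval `{0, 1, …, ⌈m/2⌉ − 1}`
(of size `(m+1)/2` in natural division) is a plague for the rule
"if `x − λ ∈ P` and `x − (λ−1) ∈ P` then add `x`". -/
theorem interval_plague (m : ℕ) (hm : 2 ≤ m) (lam : ZMod m)
    (h0 : lam ≠ 0) (h1 : lam ≠ 1) (I : Set (ZMod m))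
    (hI : I = {x : ZMod m | ∃ k : ℕ, k < (m + 1) / 2 ∧ x = (k : ZMod m)}) :
    ∀ x : ZMod m, Reach12 lam I x := by
  have : NeZero m := ⟨by omega⟩
  set n := (m + 1) / 2
  have hbase : ∀ k < n, (k : ZMod m) ∈ I := fun k hk => hI ▸ ⟨k, hk, rfl⟩
  obtain ⟨L, h2L, hLn, hL | hL⟩ := ZMod.exists_natCast_eq_or_one_sub_eq h0 h1
  · exact Reach12.of_le hbase hL h2L hLn
  · have hsymm : ∀ k < n, (k : ZMod m) ∈ ((((n - 1 : ℕ) : ZMod m) - ·) ⁻¹' I) := fun k hk =>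
      hI ▸ ⟨n - 1 - k, by omega, by simp [Nat.cast_sub (show k ≤ n - 1 by omega)]⟩
    intro x
    simpa using (Reach12.of_le hsymm hL h2L hLn (((n - 1 : ℕ) : ZMod m) - x)).reflect
end
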